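/- The second Rogers–Ramanujan identity: as formal power series in q, the sum over n ≥ 0 of q^(n^2+n)/(q;q)_n equals 1/((q^2;q^5)_∞ (q^3;q^5)_∞). -/

import Mathlib

open scoped Finset

noncomputable instance : TopologicalSpace (PowerSeries ℚ) :=
  Pi.topologicalSpace (ι := Unit →₀ ℕ) (Y := fun _ => ℚ)

/-- The formal variable `q`. -/
noncomputable def q : PowerSeries ℚ := PowerSeries.X

/-- The q-Pochhammer symbol `(q;q)_n = ∏_{k=0}^{n-1} (1 - q·q^k)`. -/
noncomputable def qPoch (n : ℕ) : PowerSeries ℚ :=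
  ∏ k ∈ Finset.range n, (1 - q ^ (k + 1))

/-- The Gaussian binomial coefficient `[m choose k]_q`, zero unless `k ≤ m`. -/
noncomputable def qBinom (m k : ℕ) : PowerSeries ℚ :=
  if k ≤ m then qPoch m * (qPoch k * qPoch (m - k))⁻¹ else 0

/-!
Schur's polynomials `e₀ = e₁ = 1`, `eₙ₊₂ = eₙ₊₁ + q^(n+2) eₙ` (`rrPoly`) have two closed forms,
the positive sum `∑ₖ q^(k²+k) [n-k, k]` and the alternating sum
`∑ⱼ (-1)^j q^(j(5j+3)/2) [n+1, ⌊(n-5j)/2⌋]`: both satisfy the recurrence by the q-Pascal rules.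
As `n → ∞` (coefficientwise), the first tends to the Rogers–Ramanujan series, while the second
times `(q;q)_∞` tends to the theta series `∑ⱼ (-1)^j q^(j(5j+3)/2)`. The finite Jacobi triple
product `∑ₖ (-1)^k q^(k(5k+3)/2) [2n, n+k]_{q⁵} = ∏_{j<n} (1 - q^(5j+1)) (1 - q^(5j+4))` turns
the theta series into `(q, q⁴, q⁵; q⁵)_∞`, and dividing by `(q;q)_∞` leaves
`1/((q²;q⁵)_∞ (q³;q⁵)_∞)`.

The finite identities are polynomial identities; they are proved in a field where `q` is
invertible, so that the index shifts in the sums over `ℤ` need no sign conditions on exponents.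
-/

open Finset

section GaussianBinomial

variable {R S : Type*}

def qPochhammer [CommRing R] (x : R) (n : ℕ) : R := ∏ k ∈ range n, (1 - x ^ (k + 1))

def gaussBinom [CommSemiring R] (x : R) : ℕ → ℕ → R
  | _, 0 => 1
  | 0, _ + 1 => 0
  | n + 1, k + 1 => gaussBinom x n k + x ^ (k + 1) * gaussBinom x n (k + 1)

section CommSemiring

variable [CommSemiring R] [CommSemiring S] (x : R)

@[simp] lemma gaussBinom_zero_right (n : ℕ) : gaussBinom x n 0 = 1 := by cases n <;> rfl

@[simp] lemma gaussBinom_zero_succ (k : ℕ) : gaussBinom x 0 (k + 1) = 0 := rfl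

lemma gaussBinom_succ_succ (n k : ℕ) :
    gaussBinom x (n + 1) (k + 1) = gaussBinom x n k + x ^ (k + 1) * gaussBinom x n (k + 1) :=
  rfl

lemma gaussBinom_eq_zero_of_lt {n k : ℕ} (h : n < k) : gaussBinom x n k = 0 := by
  induction n generalizing k with
  | zero => obtain ⟨k, rfl⟩ := Nat.exists_eq_add_one_of_ne_zero h.ne'; rfl
  | succ n ih =>
    obtain ⟨k, rfl⟩ := Nat.exists_eq_add_one_of_ne_zero (by omega : k ≠ 0)
    rw [gaussBinom_succ_succ, ih (by omega), ih (by omega), mul_zero, add_zero]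

lemma map_gaussBinom (f : R →+* S) (n k : ℕ) : f (gaussBinom x n k) = gaussBinom (f x) n k := by
  induction n generalizing k with
  | zero => cases k <;> simp
  | succ n ih => cases k <;> simp [gaussBinom_succ_succ, ih]

end CommSemiring

variable [CommRing R] (x : R)

lemma gaussBinom_succ_succ' (n k : ℕ) :
    gaussBinom x (n + 1) (k + 1) = x ^ (n - k) * gaussBinom x n k + gaussBinom x n (k + 1) := by
  induction n generalizing k with
  | zero => cases k <;> simp [gaussBinom_succ_succ]
  | succ n ih =>
    rcases k with _ | k
    · have := ih 0
      simp only [gaussBinom_succ_succ, gaussBinom_zero_right, Nat.sub_zero] at this ⊢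
      linear_combination x * this
    have hpow : x ^ (k + 2) * x ^ (n - (k + 1)) * gaussBinom x n (k + 1) =
        x ^ (n - k) * x ^ (k + 1) * gaussBinom x n (k + 1) := by
      rcases le_or_gt (k + 1) n with h | h
      · simp only [← pow_add]; congr 2; omega
      · simp [gaussBinom_eq_zero_of_lt x h]
    rw [gaussBinom_succ_succ x (n + 1), Nat.add_sub_add_right]
    linear_combination ih k - x ^ (n - k) * gaussBinom_succ_succ x n k +
      x ^ (k + 2) * ih (k + 1) - gaussBinom_succ_succ x n (k + 1) + hpow

lemma gaussBinom_mul_qPochhammer (n k : ℕ) :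
    gaussBinom x n k * qPochhammer x k = ∏ j ∈ range k, (1 - x ^ (n - j)) := by
  induction n generalizing k with
  | zero => cases k <;> simp [qPochhammer, prod_range_succ']
  | succ n ih =>
    rcases k with _ | k
    · simp [qPochhammer]
    have hpow : x ^ (k + 1) * x ^ (n - k) * gaussBinom x n k =
        x ^ (n + 1) * gaussBinom x n k := by
      rcases le_or_gt k n with h | h
      · rw [← pow_add]; congr 2; omega
      · simp [gaussBinom_eq_zero_of_lt x h]
    have hsucc := ih (k + 1)
    rw [qPochhammer, prod_range_succ, ← qPochhammer, prod_range_succ, ← ih k] at hsucc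
    rw [prod_range_succ']
    simp only [Nat.add_sub_add_right, Nat.sub_zero]
    rw [← ih k, gaussBinom_succ_succ, qPochhammer, prod_range_succ, ← qPochhammer]
    linear_combination x ^ (k + 1) * hsucc - qPochhammer x k * hpow

lemma qPochhammer_five_mul (n : ℕ) :
    qPochhammer x (5 * n) = (∏ j ∈ range n, ((1 - x ^ (5 * j + 1)) * (1 - x ^ (5 * j + 4)))) *
      qPochhammer (x ^ 5) n * ∏ j ∈ range n, ((1 - x ^ (5 * j + 2)) * (1 - x ^ (5 * j + 3))) := by
  induction n with
  | zero => simp [qPochhammer]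
  | succ n ih =>
    rw [show 5 * (n + 1) = 5 * n + 5 by ring, qPochhammer, prod_range_add, ← qPochhammer, ih]
    simp only [qPochhammer, prod_range_succ, prod_range_zero]
    ring

end GaussianBinomial

section GaussianBinomialInt

variable {R S : Type*} [CommSemiring R] [CommSemiring S] (x : R)

def gaussBinomInt (n : ℕ) : ℤ → R
  | (k : ℕ) => gaussBinom x n k
  | .negSucc _ => 0

@[simp] lemma gaussBinomInt_natCast (n k : ℕ) : gaussBinomInt x n k = gaussBinom x n k := rfl

@[simp] lemma gaussBinomInt_zero_right (n : ℕ) : gaussBinomInt x n 0 = 1 :=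
  gaussBinom_zero_right x n

lemma gaussBinomInt_of_neg (n : ℕ) {r : ℤ} (h : r < 0) : gaussBinomInt x n r = 0 := by
  obtain ⟨k, rfl⟩ := Int.exists_eq_neg_ofNat h.le
  rcases k with _ | k
  · simp at h
  · rfl

lemma gaussBinomInt_of_lt {n : ℕ} {r : ℤ} (h : n < r) : gaussBinomInt x n r = 0 := by
  lift r to ℕ using (by omega)
  exact gaussBinom_eq_zero_of_lt x (by omega)

lemma gaussBinomInt_eq_zero {n : ℕ} {r : ℤ} (h : r < 0 ∨ n < r) : gaussBinomInt x n r = 0 :=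
  h.elim (gaussBinomInt_of_neg x n) (gaussBinomInt_of_lt x)

lemma map_gaussBinomInt (f : R →+* S) (n : ℕ) (r : ℤ) :
    f (gaussBinomInt x n r) = gaussBinomInt (f x) n r := by
  cases r
  · exact map_gaussBinom x f n _
  · exact map_zero f

lemma hasFiniteSupport_mul_gaussBinomInt (n : ℕ) {r : ℤ → ℤ} (hr : r.Injective) (c : ℤ → R) :
    Function.HasFiniteSupport fun k => c k * gaussBinomInt x n (r k) := by
  refine ((Set.finite_Icc (0 : ℤ) n).preimage hr.injOn).subset fun k hk => ?_
  by_contra h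
  simp only [Set.mem_preimage, Set.mem_Icc, not_and_or, not_le] at h
  exact hk (by simp [gaussBinomInt_eq_zero x h])

lemma finsum_mul_gaussBinomInt_eq_sum (n : ℕ) (c : ℤ → R) {r : ℤ → ℤ} {s : Finset ℤ}
    (hs : ∀ k ∉ s, r k < 0 ∨ n < r k) :
    ∑ᶠ k, c k * gaussBinomInt x n (r k) = ∑ k ∈ s, c k * gaussBinomInt x n (r k) :=
  finsum_eq_sum_of_support_subset _ fun k hk => by
    by_contra h
    exact hk (by simp [gaussBinomInt_eq_zero x (hs k h)])

end GaussianBinomialInt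

section GaussianBinomialIntField

variable {K : Type*} [Field K] (x : K)

lemma gaussBinomInt_succ (n : ℕ) (r : ℤ) :
    gaussBinomInt x (n + 1) r = gaussBinomInt x n (r - 1) + x ^ r * gaussBinomInt x n r := by
  rcases lt_or_ge r 0 with h | h
  · simp [gaussBinomInt_of_neg, h, show r - 1 < 0 by omega]
  lift r to ℕ using h
  rcases r with _ | k
  · simp [gaussBinomInt_of_neg]
  · rw [show ((k + 1 : ℕ) : ℤ) - 1 = k by push_cast; ring]
    simp only [gaussBinomInt_natCast, gaussBinom_succ_succ, zpow_natCast]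

lemma gaussBinomInt_succ' (n : ℕ) (r : ℤ) :
    gaussBinomInt x (n + 1) r =
      x ^ ((n : ℤ) + 1 - r) * gaussBinomInt x n (r - 1) + gaussBinomInt x n r := by
  rcases lt_or_ge r 0 with h | h
  · simp [gaussBinomInt_of_neg, h, show r - 1 < 0 by omega]
  lift r to ℕ using h
  rcases r with _ | k
  · simp [gaussBinomInt_of_neg]
  rw [show ((k + 1 : ℕ) : ℤ) - 1 = k by push_cast; ring]
  simp only [gaussBinomInt_natCast, gaussBinom_succ_succ']
  rcases le_or_gt k n with hk | hk
  · rw [show (n : ℤ) + 1 - ((k + 1 : ℕ) : ℤ) = ((n - k : ℕ) : ℤ) by omega, zpow_natCast]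
  · simp [gaussBinom_eq_zero_of_lt x hk]

end GaussianBinomialIntField

section Finsum

variable {M : Type*}

lemma finsum_int_add_one [AddCommMonoid M] (f : ℤ → M) : ∑ᶠ k, f (k + 1) = ∑ᶠ k, f k :=
  finsum_comp_equiv (Equiv.addRight 1)

lemma finsum_sub_shift [AddCommGroup M] {f g : ℤ → M} (hf : f.HasFiniteSupport)
    (hg : g.HasFiniteSupport) (s : ℤ) : ∑ᶠ i, (f i - g i) = ∑ᶠ i, (f i - g (i + s)) := by
  have hg' : Function.HasFiniteSupport fun i => g (i + s) :=
    hg.comp_of_injective (add_left_injective s)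
  rw [finsum_sub_distrib hf hg, finsum_sub_distrib hf hg']
  congr 1
  exact (finsum_comp_equiv (Equiv.addRight s)).symm

lemma finsum_int_eq_even_add_odd [AddCommMonoid M] {f : ℤ → M} (hf : f.HasFiniteSupport) :
    ∑ᶠ j, f j = ∑ᶠ i, (f (2 * i) + f (2 * i + 1)) := by
  have hcover : Set.range (fun i : ℤ => 2 * i) ∪ Set.range (fun i => 2 * i + 1) = Set.univ := by
    ext j
    obtain ⟨i, rfl | rfl⟩ := Int.even_or_odd' j <;> simp
  have hdisj : Disjoint (Set.range fun i : ℤ => 2 * i) (Set.range fun i => 2 * i + 1) := by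
    refine Set.disjoint_left.2 ?_
    rintro _ ⟨a, rfl⟩ ⟨b, hb⟩
    simp only at hb
    omega
  have heven : Function.HasFiniteSupport fun i => f (2 * i) :=
    hf.comp_of_injective fun a b h => by simpa using h
  have hodd : Function.HasFiniteSupport fun i => f (2 * i + 1) :=
    hf.comp_of_injective fun a b h => by simpa using h
  rw [← finsum_mem_univ, ← hcover,
    finsum_mem_union' hdisj (hf.subset Set.inter_subset_right) (hf.subset Set.inter_subset_right),
    finsum_mem_range (fun a b h => by simpa using h),
    finsum_mem_range (fun a b h => by simpa using h), finsum_add_distrib heven hodd]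

end Finsum

section Theta

variable {R S : Type*} [CommRing R] [CommRing S]

/-- The exponent `k(5k+3)/2` is a nonnegative integer (`natAbs_le_thetaCoeff_exponent`), so
`toNat` loses nothing. -/
def thetaCoeff (x : R) (k : ℤ) : R := (k.negOnePow : R) * x ^ (k * (5 * k + 3) / 2).toNat

lemma map_thetaCoeff (f : R →+* S) (x : R) (k : ℤ) : f (thetaCoeff x k) = thetaCoeff (f x) k := by
  simp [thetaCoeff]

lemma natAbs_le_thetaCoeff_exponent (k : ℤ) : (k.natAbs : ℤ) ≤ k * (5 * k + 3) / 2 := by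
  rw [Int.le_ediv_iff_mul_le two_pos]
  rcases le_or_gt 0 k with h | h
  · rw [Int.natAbs_of_nonneg h]; nlinarith
  · rw [Int.ofNat_natAbs_of_nonpos h.le]; nlinarith

variable {K : Type*} [Field K] (x : K)

lemma thetaCoeff_eq_zpow (k : ℤ) : thetaCoeff x k = (-1) ^ k * x ^ (k * (5 * k + 3) / 2) := by
  have h := (Int.natCast_nonneg k.natAbs).trans (natAbs_le_thetaCoeff_exponent k)
  rw [thetaCoeff, ← zpow_natCast, Int.toNat_of_nonneg h, Int.cast_negOnePow]

lemma thetaCoeff_two_mul (i : ℤ) : thetaCoeff x (2 * i) = x ^ (10 * i ^ 2 + 3 * i) := by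
  rw [thetaCoeff_eq_zpow, show 2 * i * (5 * (2 * i) + 3) = (10 * i ^ 2 + 3 * i) * 2 by ring,
    Int.mul_ediv_cancel _ two_ne_zero, zpow_mul]
  simp

lemma thetaCoeff_two_mul_add_one (i : ℤ) :
    thetaCoeff x (2 * i + 1) = -x ^ (10 * i ^ 2 + 13 * i + 4) := by
  rw [thetaCoeff_eq_zpow,
    show (2 * i + 1) * (5 * (2 * i + 1) + 3) = (10 * i ^ 2 + 13 * i + 4) * 2 by ring,
    Int.mul_ediv_cancel _ two_ne_zero, zpow_add_one₀ (by norm_num), zpow_mul]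
  simp

variable {x} in
lemma thetaCoeff_add_one (hx : x ≠ 0) (k : ℤ) :
    thetaCoeff x (k + 1) = -x ^ (5 * k + 4) * thetaCoeff x k := by
  rw [thetaCoeff_eq_zpow, thetaCoeff_eq_zpow, zpow_add_one₀ (by norm_num),
    show (k + 1) * (5 * (k + 1) + 3) = k * (5 * k + 3) + (5 * k + 4) * 2 by ring,
    Int.add_mul_ediv_right _ _ two_ne_zero, zpow_add₀ hx]
  ring

end Theta

section RogersRamanujanPolynomial

variable {R S : Type*} [CommRing R] [CommRing S]

def rrPoly (x : R) : ℕ → R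
  | 0 => 1
  | 1 => 1
  | n + 2 => rrPoly x (n + 1) + x ^ (n + 2) * rrPoly x n

lemma map_rrPoly (f : R →+* S) (x : R) (n : ℕ) : f (rrPoly x n) = rrPoly (f x) n := by
  induction n using Nat.twoStepInduction with
  | zero => simp [rrPoly]
  | one => simp [rrPoly]
  | more n ih₁ ih₂ => simp [rrPoly, ih₁, ih₂]

lemma pow_mul_gaussBinom_sub_succ (x : R) {n j : ℕ} (hj : j ≤ n) :
    x ^ ((j + 1) ^ 2 + (j + 1)) * gaussBinom x (n + 1 - j) (j + 1) =
      x ^ ((j + 1) ^ 2 + (j + 1)) * gaussBinom x (n - j) (j + 1) +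
        x ^ (n + 2) * (x ^ (j ^ 2 + j) * gaussBinom x (n - j) j) := by
  rw [show n + 1 - j = n - j + 1 by omega, gaussBinom_succ_succ']
  rcases le_or_gt (2 * j) n with h | h
  · obtain ⟨t, rfl⟩ := Nat.exists_eq_add_of_le h
    rw [show 2 * j + t - j - j = t by omega]
    ring
  · rw [gaussBinom_eq_zero_of_lt x (by omega)]
    ring

lemma rrPoly_eq_sum (x : R) (n : ℕ) :
    rrPoly x n = ∑ k ∈ range (n + 1), x ^ (k ^ 2 + k) * gaussBinom x (n - k) k := by
  induction n using Nat.twoStepInduction with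
  | zero => simp [rrPoly]
  | one => simp [rrPoly, sum_range_succ]
  | more n ih₁ ih₂ =>
    have peel₂ : ∑ k ∈ range (n + 2 + 1), x ^ (k ^ 2 + k) * gaussBinom x (n + 2 - k) k =
        ∑ j ∈ range (n + 1), x ^ ((j + 1) ^ 2 + (j + 1)) * gaussBinom x (n + 1 - j) (j + 1) +
          1 := by
      rw [sum_range_succ', sum_range_succ,
        gaussBinom_eq_zero_of_lt x (by omega : n + 2 - (n + 1 + 1) < n + 1 + 1)]
      simp
    have peel₁ : ∑ k ∈ range (n + 1 + 1), x ^ (k ^ 2 + k) * gaussBinom x (n + 1 - k) k =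
        ∑ j ∈ range (n + 1), x ^ ((j + 1) ^ 2 + (j + 1)) * gaussBinom x (n - j) (j + 1) + 1 := by
      rw [sum_range_succ']
      simp
    rw [rrPoly, ih₁, ih₂, peel₁, peel₂,
      sum_congr rfl fun j hj => pow_mul_gaussBinom_sub_succ x (mem_range_succ_iff.1 hj),
      sum_add_distrib, mul_sum]
    ring

end RogersRamanujanPolynomial

section SchurSum

variable {R S : Type*} [CommRing R] [CommRing S]

/-- `∑ⱼ (-1)^j x^(j(5j+3)/2) [n+1, ⌊(n-5j)/2⌋]_x`; integer division rounds down here. -/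
noncomputable def schurSum (x : R) (n : ℕ) : R :=
  ∑ j ∈ Icc (-(n : ℤ)) n, thetaCoeff x j * gaussBinomInt x (n + 1) ((n - 5 * j) / 2)

lemma map_schurSum (f : R →+* S) (x : R) (n : ℕ) : f (schurSum x n) = schurSum (f x) n := by
  simp [schurSum, map_thetaCoeff, map_gaussBinomInt]

lemma schurSum_eq_finsum (x : R) (n : ℕ) :
    schurSum x n = ∑ᶠ j, thetaCoeff x j * gaussBinomInt x (n + 1) ((n - 5 * j) / 2) :=
  (finsum_mul_gaussBinomInt_eq_sum _ _ _ fun j hj => by simp at hj; omega).symm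

lemma schurSum_zero (x : R) : schurSum x 0 = 1 := by
  rw [schurSum_eq_finsum, finsum_eq_single _ 0 fun j hj => by
    rw [gaussBinomInt_eq_zero x (by omega), mul_zero]]
  simp [thetaCoeff]

lemma schurSum_one (x : R) : schurSum x 1 = 1 := by
  rw [schurSum_eq_finsum, finsum_eq_single _ 0 fun j hj => by
    rw [gaussBinomInt_eq_zero x (by omega), mul_zero]]
  simp [thetaCoeff]

variable {K : Type*} [Field K] (x : K)

lemma schurSum_eq_finsum_parity {n : ℕ} {a b : ℤ → ℤ} (ha : ∀ i, ((n : ℤ) - 5 * (2 * i)) / 2 = a i)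
    (hb : ∀ i, ((n : ℤ) - 5 * (2 * i + 1)) / 2 = b i) :
    schurSum x n = ∑ᶠ i, (x ^ (10 * i ^ 2 + 3 * i) * gaussBinomInt x (n + 1) (a i) -
      x ^ (10 * i ^ 2 + 13 * i + 4) * gaussBinomInt x (n + 1) (b i)) := by
  rw [schurSum_eq_finsum, finsum_int_eq_even_add_odd
    (hasFiniteSupport_mul_gaussBinomInt _ _ (fun j k h => by omega) _)]
  refine finsum_congr fun i => ?_
  rw [ha, hb, thetaCoeff_two_mul, thetaCoeff_two_mul_add_one]
  ring

lemma hasFiniteSupport_zpow_mul_gaussBinomInt (N : ℕ) (c : ℤ) (e : ℤ → ℤ) :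
    Function.HasFiniteSupport fun i => x ^ e i * gaussBinomInt x N (c - 5 * i) :=
  hasFiniteSupport_mul_gaussBinomInt _ _ (fun a b h => by omega) _

variable {x}

lemma schurSum_two_mul_add_three (hx : x ≠ 0) (m : ℕ) :
    schurSum x (2 * m + 3) =
      schurSum x (2 * m + 2) + x ^ (2 * m + 3) * schurSum x (2 * m + 1) := by
  have hfin := hasFiniteSupport_zpow_mul_gaussBinomInt x
  rw [schurSum_eq_finsum_parity x (a := fun i => m + 1 - 5 * i) (b := fun i => m - 1 - 5 * i)
      (fun i => by push_cast; omega) (fun i => by push_cast; omega),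
    schurSum_eq_finsum_parity x (a := fun i => m + 1 - 5 * i) (b := fun i => m - 2 - 5 * i)
      (fun i => by push_cast; omega) (fun i => by push_cast; omega),
    schurSum_eq_finsum_parity x (a := fun i => m - 5 * i) (b := fun i => m - 2 - 5 * i)
      (fun i => by push_cast; omega) (fun i => by push_cast; omega),
    mul_finsum, ← finsum_add_distrib]
  rotate_left
  · exact (hfin _ _ _).sub (hfin _ _ _)
  · exact .mul_right _ ((hfin _ _ _).sub (hfin _ _ _))
  refine finsum_congr fun i => ?_
  rw [gaussBinomInt_succ' x (2 * m + 3) (m + 1 - 5 * i),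
    gaussBinomInt_succ x (2 * m + 3) (m - 1 - 5 * i),
    gaussBinomInt_succ x (2 * m + 2) (m + 1 - 5 * i - 1),
    gaussBinomInt_succ' x (2 * m + 2) (m - 1 - 5 * i)]
  simp only [mul_add, mul_sub, ← mul_assoc, ← zpow_add₀ hx, ← zpow_natCast]
  push_cast
  ring_nf

lemma pow_mul_schurSum_two_mul (hx : x ≠ 0) (m : ℕ) :
    x ^ (2 * m + 2) * schurSum x (2 * m) =
      ∑ᶠ i : ℤ, (x ^ (10 * i ^ 2 - 2 * i + m + 1) * gaussBinomInt x (2 * m + 2) (m + 1 - 5 * i) -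
        x ^ (10 * i ^ 2 + 18 * i + m + 9) * gaussBinomInt x (2 * m + 2) (m - 3 - 5 * i)) := by
  have hfin := hasFiniteSupport_zpow_mul_gaussBinomInt x
  have pascal (i : ℤ) :
      x ^ (10 * i ^ 2 - 2 * i + m + 1) * gaussBinomInt x (2 * m + 2) (m + 1 - 5 * i) -
        x ^ (10 * (i + -1) ^ 2 + 18 * (i + -1) + m + 9) *
          gaussBinomInt x (2 * m + 2) (m - 3 - 5 * (i + -1)) =
      x ^ (10 * i ^ 2 + 3 * i + 2 * m + 2) * gaussBinomInt x (2 * m + 1) (m - 5 * i) -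
        x ^ (10 * i ^ 2 - 7 * i + 2 * m + 3) * gaussBinomInt x (2 * m + 1) (m + 2 - 5 * i) := by
    rw [gaussBinomInt_succ' x (2 * m + 1) (m + 1 - 5 * i),
      gaussBinomInt_succ x (2 * m + 1) (m - 3 - 5 * (i + -1))]
    simp only [mul_add, ← mul_assoc, ← zpow_add₀ hx]
    push_cast
    ring_nf
  rw [finsum_sub_shift (hfin _ _ _) (hfin _ _ _) (-1), finsum_congr pascal,
    finsum_sub_shift (hfin _ _ _) (hfin _ _ _) 1,
    schurSum_eq_finsum_parity x (a := fun i => m - 5 * i) (b := fun i => m - 3 - 5 * i)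
      (fun i => by push_cast; omega) (fun i => by push_cast; omega), mul_finsum]
  refine finsum_congr fun i => ?_
  rw [← zpow_natCast]
  simp only [mul_sub, ← mul_assoc, ← zpow_add₀ hx]
  push_cast
  ring_nf

lemma schurSum_two_mul_add_two (hx : x ≠ 0) (m : ℕ) :
    schurSum x (2 * m + 2) = schurSum x (2 * m + 1) + x ^ (2 * m + 2) * schurSum x (2 * m) := by
  have hfin := hasFiniteSupport_zpow_mul_gaussBinomInt x
  rw [schurSum_eq_finsum_parity x (a := fun i => m + 1 - 5 * i) (b := fun i => m - 2 - 5 * i)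
      (fun i => by push_cast; omega) (fun i => by push_cast; omega),
    schurSum_eq_finsum_parity x (a := fun i => m - 5 * i) (b := fun i => m - 2 - 5 * i)
      (fun i => by push_cast; omega) (fun i => by push_cast; omega),
    pow_mul_schurSum_two_mul hx, ← finsum_add_distrib]
  rotate_left
  · exact (hfin _ _ _).sub (hfin _ _ _)
  · exact (hfin _ _ _).sub (hfin _ _ _)
  refine finsum_congr fun i => ?_
  rw [gaussBinomInt_succ x (2 * m + 2) (m + 1 - 5 * i),
    gaussBinomInt_succ' x (2 * m + 2) (m - 2 - 5 * i)]
  simp only [mul_add, ← mul_assoc, ← zpow_add₀ hx]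
  push_cast
  ring_nf

lemma schurSum_add_two (hx : x ≠ 0) (n : ℕ) :
    schurSum x (n + 2) = schurSum x (n + 1) + x ^ (n + 2) * schurSum x n := by
  obtain ⟨m, rfl | rfl⟩ := Nat.even_or_odd' n
  · exact schurSum_two_mul_add_two hx m
  · exact schurSum_two_mul_add_three hx m

lemma rrPoly_eq_schurSum_of_ne_zero (hx : x ≠ 0) (n : ℕ) : rrPoly x n = schurSum x n := by
  induction n using Nat.twoStepInduction with
  | zero => rw [schurSum_zero, rrPoly]
  | one => rw [schurSum_one, rrPoly]
  | more n ih₁ ih₂ => rw [rrPoly, schurSum_add_two hx, ih₁, ih₂]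

open Polynomial in
/-- Schur's identity. Being an identity of polynomials, it follows from the case of the
indeterminate in the fraction field of `ℤ[X]`. -/
theorem rrPoly_eq_schurSum (x : R) (n : ℕ) : rrPoly x n = schurSum x n := by
  have hX : algebraMap ℤ[X] (FractionRing ℤ[X]) X ≠ 0 :=
    (map_ne_zero_iff _ (IsFractionRing.injective _ _)).2 X_ne_zero
  have h : rrPoly (X : ℤ[X]) n = schurSum X n :=
    IsFractionRing.injective ℤ[X] (FractionRing ℤ[X]) <| by
      rw [map_rrPoly, map_schurSum, rrPoly_eq_schurSum_of_ne_zero hX]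
  simpa [map_rrPoly, map_schurSum] using congrArg (eval₂RingHom (Int.castRingHom R) x) h

end SchurSum

section TripleProductSum

variable {R S : Type*} [CommRing R] [CommRing S]

noncomputable def tripleProductSum (x : R) (n : ℕ) : R :=
  ∑ k ∈ Icc (-(n : ℤ)) n, thetaCoeff x k * gaussBinomInt (x ^ 5) (2 * n) (n + k)

lemma map_tripleProductSum (f : R →+* S) (x : R) (n : ℕ) :
    f (tripleProductSum x n) = tripleProductSum (f x) n := by
  simp [tripleProductSum, map_thetaCoeff, map_gaussBinomInt]

lemma tripleProductSum_eq_finsum (x : R) (n : ℕ) :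
    tripleProductSum x n = ∑ᶠ k, thetaCoeff x k * gaussBinomInt (x ^ 5) (2 * n) (n + k) :=
  (finsum_mul_gaussBinomInt_eq_sum _ _ _ fun k hk => by simp at hk; omega).symm

variable {K : Type*} [Field K] {x : K}

lemma pow_five_zpow_eq (hx : x ≠ 0) {a b : ℤ} {c : ℕ} (h : 5 * a = b + c) :
    (x ^ 5) ^ a = x ^ b * x ^ c := by
  rw [← zpow_natCast, ← zpow_mul, ← zpow_natCast, ← zpow_add₀ hx]
  push_cast
  rw [h]

lemma hasFiniteSupport_mul_gaussBinomInt_add (y : K) (N : ℕ) (a : ℤ) (c : ℤ → K) :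
    Function.HasFiniteSupport fun k => c k * gaussBinomInt y N (a + k) :=
  hasFiniteSupport_mul_gaussBinomInt _ _ (add_right_injective a) c

lemma tripleProductSum_succ_eq_finsum (hx : x ≠ 0) (n : ℕ) :
    tripleProductSum x (n + 1) = (1 - x ^ (5 * n + 4)) *
      ∑ᶠ k, thetaCoeff x k * gaussBinomInt (x ^ 5) (2 * n + 1) (n + 1 + k) := by
  have pascal (k : ℤ) :
      thetaCoeff x k * gaussBinomInt (x ^ 5) (2 * (n + 1)) ((n + 1 : ℕ) + k) =
        thetaCoeff x k * gaussBinomInt (x ^ 5) (2 * n + 1) (n + 1 + k) +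
          thetaCoeff x k * (x ^ 5) ^ ((n : ℤ) + 1 - k) *
            gaussBinomInt (x ^ 5) (2 * n + 1) (n + k) := by
    rw [show 2 * (n + 1) = 2 * n + 1 + 1 by ring, gaussBinomInt_succ']
    push_cast
    ring_nf
  have shift : ∑ᶠ k, thetaCoeff x k * (x ^ 5) ^ ((n : ℤ) + 1 - k) *
        gaussBinomInt (x ^ 5) (2 * n + 1) (n + k) =
      -x ^ (5 * n + 4) * ∑ᶠ k, thetaCoeff x k * gaussBinomInt (x ^ 5) (2 * n + 1) (n + 1 + k) := by
    rw [mul_finsum, ← finsum_int_add_one]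
    refine finsum_congr fun k => ?_
    rw [thetaCoeff_add_one hx, pow_five_zpow_eq hx (b := -(5 * k + 4)) (c := 5 * n + 4)
      (by push_cast; ring), zpow_neg]
    field_simp
    ring_nf
  rw [tripleProductSum_eq_finsum, finsum_congr pascal,
    finsum_add_distrib (hasFiniteSupport_mul_gaussBinomInt_add _ _ _ _)
      (hasFiniteSupport_mul_gaussBinomInt_add _ _ _ _), shift]
  ring

lemma finsum_thetaCoeff_mul_gaussBinomInt_eq (hx : x ≠ 0) (n : ℕ) :
    ∑ᶠ k, thetaCoeff x k * gaussBinomInt (x ^ 5) (2 * n + 1) (n + 1 + k) =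
      (1 - x ^ (5 * n + 1)) * tripleProductSum x n := by
  have pascal (k : ℤ) :
      thetaCoeff x k * gaussBinomInt (x ^ 5) (2 * n + 1) (n + 1 + k) =
        thetaCoeff x k * (x ^ 5) ^ ((n : ℤ) + 1 + k) * gaussBinomInt (x ^ 5) (2 * n) (n + 1 + k) +
          thetaCoeff x k * gaussBinomInt (x ^ 5) (2 * n) (n + k) := by
    rw [gaussBinomInt_succ]
    ring_nf
  have shift : ∑ᶠ k, thetaCoeff x k * (x ^ 5) ^ ((n : ℤ) + 1 + k) *
        gaussBinomInt (x ^ 5) (2 * n) (n + 1 + k) =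
      -x ^ (5 * n + 1) * tripleProductSum x n := by
    rw [tripleProductSum_eq_finsum, mul_finsum]
    conv_rhs => rw [← finsum_int_add_one]
    refine finsum_congr fun k => ?_
    rw [thetaCoeff_add_one hx, pow_five_zpow_eq hx (b := 5 * k + 4) (c := 5 * n + 1)
      (by push_cast; ring)]
    ring_nf
  rw [finsum_congr pascal, finsum_add_distrib (hasFiniteSupport_mul_gaussBinomInt_add _ _ _ _)
    (hasFiniteSupport_mul_gaussBinomInt_add _ _ _ _), shift, tripleProductSum_eq_finsum]
  ring

lemma tripleProductSum_eq_prod_of_ne_zero (hx : x ≠ 0) (n : ℕ) :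
    tripleProductSum x n = ∏ j ∈ range n, ((1 - x ^ (5 * j + 1)) * (1 - x ^ (5 * j + 4))) := by
  induction n with
  | zero => simp [tripleProductSum, thetaCoeff]
  | succ n ih =>
    rw [tripleProductSum_succ_eq_finsum hx, finsum_thetaCoeff_mul_gaussBinomInt_eq hx, ih,
      prod_range_succ]
    ring

open Polynomial in
/-- A finite form of the Jacobi triple product. -/
theorem tripleProductSum_eq_prod (x : R) (n : ℕ) :
    tripleProductSum x n = ∏ j ∈ range n, ((1 - x ^ (5 * j + 1)) * (1 - x ^ (5 * j + 4))) := by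
  have hX : algebraMap ℤ[X] (FractionRing ℤ[X]) X ≠ 0 :=
    (map_ne_zero_iff _ (IsFractionRing.injective _ _)).2 X_ne_zero
  have h : tripleProductSum (X : ℤ[X]) n =
      ∏ j ∈ range n, ((1 - X ^ (5 * j + 1)) * (1 - X ^ (5 * j + 4))) :=
    IsFractionRing.injective ℤ[X] (FractionRing ℤ[X]) <| by
      rw [map_tripleProductSum, tripleProductSum_eq_prod_of_ne_zero hX]
      simp
  simpa [map_tripleProductSum] using congrArg (eval₂RingHom (Int.castRingHom R) x) h

end TripleProductSum

namespace PowerSeries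

open Filter Topology

section Congruence

variable {R : Type*} [CommRing R] {n : ℕ}

lemma smodEq_X_pow_iff {f g : R⟦X⟧} :
    f ≡ g [SMOD Ideal.span {(X : R⟦X⟧) ^ n}] ↔ ∀ i < n, coeff i f = coeff i g := by
  simp [SModEq.sub_mem, Ideal.mem_span_singleton, X_pow_dvd_iff, sub_eq_zero]

lemma eq_of_forall_smodEq_X_pow {f g : R⟦X⟧}
    (h : ∀ n, f ≡ g [SMOD Ideal.span {(X : R⟦X⟧) ^ n}]) : f = g :=
  ext fun i => smodEq_X_pow_iff.1 (h (i + 1)) i i.lt_succ_self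

lemma X_pow_mul_smodEq_zero {m : ℕ} (h : n ≤ m) (c : R⟦X⟧) :
    X ^ m * c ≡ 0 [SMOD Ideal.span {(X : R⟦X⟧) ^ n}] :=
  SModEq.zero.2 (Ideal.mem_span_singleton.2 (dvd_mul_of_dvd_left (pow_dvd_pow X h) c))

lemma pow_smodEq_zero {x : R⟦X⟧} (hx : X ∣ x) {k : ℕ} (h : n ≤ k) :
    x ^ k ≡ 0 [SMOD Ideal.span {(X : R⟦X⟧) ^ n}] := by
  obtain ⟨y, rfl⟩ := hx
  rw [mul_pow]
  exact X_pow_mul_smodEq_zero h _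

lemma one_sub_pow_smodEq_one {x : R⟦X⟧} (hx : X ∣ x) {k : ℕ} (h : n ≤ k) :
    1 - x ^ k ≡ 1 [SMOD Ideal.span {(X : R⟦X⟧) ^ n}] := by
  simpa using (SModEq.refl 1).sub (pow_smodEq_zero hx h)

lemma one_sub_pow_mul_one_sub_pow_smodEq_one {x : R⟦X⟧} (hx : X ∣ x) {a b : ℕ} (ha : n ≤ a)
    (hb : n ≤ b) : (1 - x ^ a) * (1 - x ^ b) ≡ 1 [SMOD Ideal.span {(X : R⟦X⟧) ^ n}] := by
  simpa using (one_sub_pow_smodEq_one hx ha).mul (one_sub_pow_smodEq_one hx hb)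

lemma gaussBinom_mul_qPochhammer_smodEq_one {x : R⟦X⟧} (hx : X ∣ x) {N k : ℕ}
    (h : n + k ≤ N + 1) :
    gaussBinom x N k * qPochhammer x k ≡ 1 [SMOD Ideal.span {(X : R⟦X⟧) ^ n}] := by
  rw [gaussBinom_mul_qPochhammer]
  simpa using SModEq.prod fun j (hj : j ∈ range k) =>
    one_sub_pow_smodEq_one (n := n) hx (by simp at hj; omega)

lemma thetaCoeff_X_smodEq_zero {k : ℤ} (h : n ≤ k.natAbs) :
    thetaCoeff (X : R⟦X⟧) k ≡ 0 [SMOD Ideal.span {(X : R⟦X⟧) ^ n}] := by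
  rw [thetaCoeff, mul_comm]
  exact X_pow_mul_smodEq_zero (by have := natAbs_le_thetaCoeff_exponent k; omega) _

end Congruence

section Limits

open scoped WithPiTopology

variable {R : Type*} [CommRing R] [TopologicalSpace R] {n : ℕ}

lemma summable_of_smodEq_zero {ι : Type*} {f : ι → R⟦X⟧}
    (h : ∀ n, ∀ᶠ j in cofinite, f j ≡ 0 [SMOD Ideal.span {(X : R⟦X⟧) ^ n}]) : Summable f := by
  refine (WithPiTopology.summable_iff_summable_coeff R).2 fun i => summable_of_hasFiniteSupport ?_
  refine (h (i + 1)).mono fun j hj => ?_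
  simpa using smodEq_X_pow_iff.1 hj i i.lt_succ_self

lemma multipliable_of_smodEq_one {f : ℕ → R⟦X⟧}
    (h : ∀ n, ∀ᶠ j in atTop, f j ≡ 1 [SMOD Ideal.span {(X : R⟦X⟧) ^ n}]) : Multipliable f := by
  have := WithPiTopology.multipliable_one_add_of_tendsto_order_atTop_nhds_top R
    (f := fun j => f j - 1) ?_
  · simpa using this
  refine ENat.tendsto_nhds_top_iff_natCast_lt.2 fun n => (h (n + 1)).mono fun j hj => ?_
  have : ((n + 1 : ℕ) : ℕ∞) ≤ (f j - 1).order := le_order _ _ fun i hi => by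
    simpa [sub_eq_zero] using smodEq_X_pow_iff.1 hj i (by exact_mod_cast hi)
  exact lt_of_lt_of_le (by exact_mod_cast n.lt_succ_self) this

variable [T2Space R]

lemma smodEq_of_tendsto {ι : Type*} {l : Filter ι} [l.NeBot] {F : ι → R⟦X⟧} {f g : R⟦X⟧}
    (hF : Tendsto F l (𝓝 f)) (h : ∀ᶠ t in l, F t ≡ g [SMOD Ideal.span {(X : R⟦X⟧) ^ n}]) :
    f ≡ g [SMOD Ideal.span {(X : R⟦X⟧) ^ n}] :=
  smodEq_X_pow_iff.2 fun i hi => tendsto_nhds_unique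
    ((WithPiTopology.continuous_coeff R i).continuousAt.tendsto.comp hF)
    (tendsto_const_nhds.congr' (h.mono fun _ ht => (smodEq_X_pow_iff.1 ht i hi).symm))

lemma tsum_smodEq_sum {ι : Type*} {f : ι → R⟦X⟧} (hf : Summable f) {s : Finset ι}
    (h : ∀ j ∉ s, f j ≡ 0 [SMOD Ideal.span {(X : R⟦X⟧) ^ n}]) :
    ∑' j, f j ≡ ∑ j ∈ s, f j [SMOD Ideal.span {(X : R⟦X⟧) ^ n}] := by
  classical
  refine smodEq_of_tendsto hf.hasSum ((eventually_ge_atTop s).mono fun t hst => ?_)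
  rw [← Finset.sum_sdiff hst]
  simpa using (SModEq.sum fun j hj => h j (Finset.mem_sdiff.1 hj).2).add (SModEq.refl _)

lemma tprod_smodEq_prod {ι : Type*} {f : ι → R⟦X⟧} (hf : Multipliable f) {s : Finset ι}
    (h : ∀ j ∉ s, f j ≡ 1 [SMOD Ideal.span {(X : R⟦X⟧) ^ n}]) :
    ∏' j, f j ≡ ∏ j ∈ s, f j [SMOD Ideal.span {(X : R⟦X⟧) ^ n}] := by
  classical
  refine smodEq_of_tendsto hf.hasProd ((eventually_ge_atTop s).mono fun t hst => ?_)
  rw [← Finset.prod_sdiff hst]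
  simpa using (SModEq.prod fun j hj => h j (Finset.mem_sdiff.1 hj).2).mul (SModEq.refl _)

end Limits

section ThetaSeries

open scoped WithPiTopology

variable {R : Type*} [CommRing R] [TopologicalSpace R] {n : ℕ}

noncomputable def qPochhammerInf (x : R⟦X⟧) : R⟦X⟧ := ∏' j, (1 - x ^ (j + 1))

variable (R) in
noncomputable def thetaSeries : R⟦X⟧ := ∑' k : ℤ, thetaCoeff X k

lemma summable_thetaCoeff_X : Summable (thetaCoeff (X : R⟦X⟧)) :=
  summable_of_smodEq_zero fun n => by
    refine ((Set.finite_Ioo (-(n : ℤ)) n).subset fun k hk => ?_ : Set.Finite _)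
    by_contra hk'
    exact hk (thetaCoeff_X_smodEq_zero (by simp at hk'; omega))

variable [T2Space R]

lemma qPochhammerInf_smodEq {x : R⟦X⟧} (hx : X ∣ x) {k : ℕ} (h : n ≤ k) :
    qPochhammerInf x ≡ qPochhammer x k [SMOD Ideal.span {(X : R⟦X⟧) ^ n}] :=
  tprod_smodEq_prod
    (multipliable_of_smodEq_one fun n => (eventually_ge_atTop n).mono fun j hj =>
      one_sub_pow_smodEq_one hx (by omega))
    fun j hj => one_sub_pow_smodEq_one hx (by simp at hj; omega)

lemma gaussBinomInt_mul_qPochhammerInf_smodEq_one {x : R⟦X⟧} (hx : X ∣ x) {N : ℕ} {r : ℤ}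
    (h₁ : n ≤ r) (h₂ : n + r ≤ N + 1) :
    gaussBinomInt x N r * qPochhammerInf x ≡ 1 [SMOD Ideal.span {(X : R⟦X⟧) ^ n}] := by
  lift r to ℕ using (by omega)
  exact ((SModEq.refl _).mul (qPochhammerInf_smodEq hx (by omega))).trans
    (gaussBinom_mul_qPochhammer_smodEq_one hx (by omega))

lemma thetaSeries_smodEq_sum {s : Finset ℤ} (hs : ∀ k : ℤ, k.natAbs < n → k ∈ s) :
    thetaSeries R ≡ ∑ k ∈ s, thetaCoeff X k [SMOD Ideal.span {(X : R⟦X⟧) ^ n}] :=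
  tsum_smodEq_sum summable_thetaCoeff_X fun k hk =>
    thetaCoeff_X_smodEq_zero (not_lt.1 fun h => hk (hs k h))

/-- Deep Gaussian binomials are `1 / (x; x)_∞` to any fixed order, while the theta
coefficients outside a finite window vanish to that order. -/
lemma sum_thetaCoeff_mul_gaussBinomInt_mul_smodEq {x : R⟦X⟧} (hx : X ∣ x) {s : Finset ℤ}
    {N : ℕ} {r : ℤ → ℤ} (hs : ∀ k : ℤ, k.natAbs < n → k ∈ s)
    (hr : ∀ k : ℤ, k.natAbs < n → n ≤ r k ∧ n + r k ≤ N + 1) :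
    (∑ k ∈ s, thetaCoeff X k * gaussBinomInt x N (r k)) * qPochhammerInf x ≡ thetaSeries R
      [SMOD Ideal.span {(X : R⟦X⟧) ^ n}] := by
  refine SModEq.trans ?_ (thetaSeries_smodEq_sum hs).symm
  rw [sum_mul]
  refine SModEq.sum fun k _ => ?_
  rcases lt_or_ge k.natAbs n with hk | hk
  · simpa [mul_assoc] using (SModEq.refl (thetaCoeff X k)).mul
      (gaussBinomInt_mul_qPochhammerInf_smodEq_one hx (hr k hk).1 (hr k hk).2)
  · have h₀ := thetaCoeff_X_smodEq_zero (R := R) hk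
    rw [mul_assoc]
    exact (h₀.mul (SModEq.refl _)).trans (by rw [zero_mul]; exact h₀.symm)

end ThetaSeries

section Products

open scoped WithPiTopology

variable {R : Type*} [CommRing R] [TopologicalSpace R] [T2Space R] {n : ℕ}

lemma tprod_one_sub_X_pow_mul_smodEq (a b : ℕ) {N : ℕ} (hN : n ≤ N) :
    ∏' j, (1 - (X : R⟦X⟧) ^ (5 * j + a)) * (1 - X ^ (5 * j + b)) ≡
      ∏ j ∈ range N, (1 - X ^ (5 * j + a)) * (1 - X ^ (5 * j + b))
      [SMOD Ideal.span {(X : R⟦X⟧) ^ n}] :=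
  tprod_smodEq_prod
    (multipliable_of_smodEq_one fun n => (eventually_ge_atTop n).mono fun _ hj =>
      one_sub_pow_mul_one_sub_pow_smodEq_one dvd_rfl (by omega) (by omega))
    fun j hj => one_sub_pow_mul_one_sub_pow_smodEq_one dvd_rfl (by simp at hj; omega)
      (by simp at hj; omega)

theorem qPochhammerInf_X_eq :
    qPochhammerInf (X : R⟦X⟧) = (∏' j, (1 - X ^ (5 * j + 1)) * (1 - X ^ (5 * j + 4))) *
      qPochhammerInf (X ^ 5) * ∏' j, (1 - X ^ (5 * j + 2)) * (1 - X ^ (5 * j + 3)) := by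
  refine eq_of_forall_smodEq_X_pow fun n => ?_
  refine (qPochhammerInf_smodEq dvd_rfl (by omega : n ≤ 5 * n)).trans ?_
  rw [qPochhammer_five_mul]
  have h₁ := tprod_one_sub_X_pow_mul_smodEq (R := R) 1 4 (le_refl n)
  have h₂ := qPochhammerInf_smodEq (R := R) (dvd_pow_self X (by norm_num : 5 ≠ 0)) (le_refl n)
  have h₃ := tprod_one_sub_X_pow_mul_smodEq (R := R) 2 3 (le_refl n)
  exact ((h₁.mul h₂).mul h₃).symm

/-- The Jacobi triple product in base `q⁵`. -/
theorem tprod_mul_qPochhammerInf_X_pow_five :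
    (∏' j, (1 - (X : R⟦X⟧) ^ (5 * j + 1)) * (1 - X ^ (5 * j + 4))) * qPochhammerInf (X ^ 5) =
      thetaSeries R := by
  refine eq_of_forall_smodEq_X_pow fun n => ?_
  have h := (tprod_one_sub_X_pow_mul_smodEq (R := R) 1 4 (by omega : n ≤ 2 * n)).mul
    (SModEq.refl (qPochhammerInf (X ^ 5 : R⟦X⟧)))
  rw [← tripleProductSum_eq_prod, tripleProductSum] at h
  exact h.trans (sum_thetaCoeff_mul_gaussBinomInt_mul_smodEq (dvd_pow_self X (by norm_num))
    (fun k hk => by simp; omega) (fun k hk => by omega))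

end Products

section RogersRamanujanSeries

open scoped WithPiTopology

variable {k : Type*} [Field k] {n : ℕ}

lemma gaussBinom_smodEq_inv_qPochhammer {N m : ℕ} (h : n + m ≤ N + 1) :
    gaussBinom (X : k⟦X⟧) N m ≡ (qPochhammer X m)⁻¹ [SMOD Ideal.span {(X : k⟦X⟧) ^ n}] := by
  have hc : constantCoeff (qPochhammer (X : k⟦X⟧) m) ≠ 0 := by simp [qPochhammer, map_prod]
  have h₁ := gaussBinom_mul_qPochhammer_smodEq_one (n := n) (dvd_rfl : (X : k⟦X⟧) ∣ X) h
  have h₂ := h₁.mul (SModEq.refl (qPochhammer (X : k⟦X⟧) m)⁻¹)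
  rwa [mul_assoc, PowerSeries.mul_inv_cancel _ hc, mul_one, one_mul] at h₂

variable (k) [TopologicalSpace k]

noncomputable def rrSeries : k⟦X⟧ := ∑' m, X ^ (m ^ 2 + m) * (qPochhammer X m)⁻¹

variable {k} [T2Space k]

lemma rrSeries_smodEq_rrPoly {L : ℕ} (hL : 3 * n ≤ L) :
    rrSeries k ≡ rrPoly X L [SMOD Ideal.span {(X : k⟦X⟧) ^ n}] := by
  have hsum : Summable fun m => (X : k⟦X⟧) ^ (m ^ 2 + m) * (qPochhammer X m)⁻¹ :=
    summable_of_smodEq_zero fun n => Nat.cofinite_eq_atTop ▸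
      (eventually_ge_atTop n).mono fun m hm => X_pow_mul_smodEq_zero (by nlinarith) _
  rw [rrPoly_eq_sum]
  refine (tsum_smodEq_sum hsum fun m hm => X_pow_mul_smodEq_zero ?_ _).trans
    (SModEq.sum fun m _ => ?_)
  · simp at hm; nlinarith
  rcases lt_or_ge m n with hm | hm
  · exact (SModEq.refl _).mul (gaussBinom_smodEq_inv_qPochhammer (by omega)).symm
  · exact (X_pow_mul_smodEq_zero (by nlinarith) _).trans
      (X_pow_mul_smodEq_zero (by nlinarith) _).symm

theorem rrSeries_mul_qPochhammerInf : rrSeries k * qPochhammerInf X = thetaSeries k := by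
  refine eq_of_forall_smodEq_X_pow fun n => ?_
  -- with `L = 7n`, both `⌊(L - 5j)/2⌋` and `L + 1 - ⌊(L - 5j)/2⌋` are at least `n` for `|j| < n`
  have h := (rrSeries_smodEq_rrPoly (k := k) (n := n) (L := 7 * n) (by omega)).mul
    (SModEq.refl (qPochhammerInf (X : k⟦X⟧)))
  rw [rrPoly_eq_schurSum, schurSum] at h
  exact h.trans (sum_thetaCoeff_mul_gaussBinomInt_mul_smodEq (dvd_rfl : (X : k⟦X⟧) ∣ X)
    (fun j hj => by simp; omega) (fun j hj => by omega))

end RogersRamanujanSeries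

end PowerSeries

open PowerSeries in
/-- The second Rogers–Ramanujan identity. -/
theorem rogers_ramanujan_second :
    ∑' n : ℕ, q ^ (n ^ 2 + n) * (qPoch n)⁻¹
      = (∏' k : ℕ, ((1 - q ^ (5 * k + 2)) * (1 - q ^ (5 * k + 3))))⁻¹ := by
  change rrSeries ℚ = (∏' k, (1 - X ^ (5 * k + 2)) * (1 - X ^ (5 * k + 3)))⁻¹
  set P := ∏' k, (1 - (X : ℚ⟦X⟧) ^ (5 * k + 2)) * (1 - X ^ (5 * k + 3))
  set A := ∏' k, (1 - (X : ℚ⟦X⟧) ^ (5 * k + 1)) * (1 - X ^ (5 * k + 4))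
  have hA : A * qPochhammerInf (X ^ 5) = thetaSeries ℚ := tprod_mul_qPochhammerInf_X_pow_five
  have hEuler : qPochhammerInf X = A * qPochhammerInf (X ^ 5) * P := qPochhammerInf_X_eq
  have key : rrSeries ℚ * P = 1 := by
    refine mul_right_cancel₀ (WithPiTopology.tprod_one_sub_X_pow_ne_zero ℚ) ?_
    change rrSeries ℚ * P * qPochhammerInf X = 1 * qPochhammerInf X
    rw [mul_right_comm, rrSeries_mul_qPochhammerInf, ← hA, ← hEuler, one_mul]
  refine (eq_inv_iff_mul_eq_one fun h => ?_).2 key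
  simpa [h] using congrArg constantCoeff key
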